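/- arXiv:math/0610024 — 7 statements merged into one kernel-verified Lean document; each statement's English description precedes it below -/
import Mathlib

section
/- Let X and Y be random variables on a probability space (Θ, 𝓕, P) taking values in standard Borel spaces 𝒳 and 𝒴 respectively, with marginal laws μ_X and μ_Y, joint law μ_{X,Y}, and regular conditional distributions μ_{Y|X=x} (the conditional distribution of Y given X) and μ_{X|Y=y}. Then the following are equivalent: (a) μ_{Y|X=x} ≪ μ_Y for μ_X-almost every x; (b) μ_{X|Y=y} ≪ μ_X for μ_Y-almost every y; (c) μ_{X,Y} ≪ μ_X ⊗ μ_Y. -/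
open MeasureTheory ProbabilityTheory

/- Disintegrating the joint law as `μ_X ⊗ μ_{Y|X}` and the product as `μ_X ⊗ const μ_Y`, (a) ⟺ (c)
is absolute continuity of two composition-products over the same base measure, which holds iff the
kernels are a.e. absolutely continuous. Exchanging the roles of `X` and `Y` gives (b) ⟺ (c), since
`Prod.swap` carries the joint law and the product of the marginals to their swapped versions. -/

namespace MeasureTheory.Measure

lemma ae_absolutelyContinuous_iff_compProd_absolutelyContinuous_prod
    {α β : Type*} {mα : MeasurableSpace α} {mβ : MeasurableSpace β}
    [MeasurableSpace.CountableOrCountablyGenerated α β]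
    (μ : Measure α) [SFinite μ] (κ : Kernel α β) [IsFiniteKernel κ]
    (ν : Measure β) [IsFiniteMeasure ν] :
    (∀ᵐ a ∂μ, κ a ≪ ν) ↔ μ ⊗ₘ κ ≪ μ.prod ν := by
  rw [← compProd_const, absolutelyContinuous_compProd_right_iff]
  rfl

lemma map_swap_absolutelyContinuous_map_swap_iff
    {α β : Type*} [MeasurableSpace α] [MeasurableSpace β] {μ ν : Measure (α × β)} :
    μ.map Prod.swap ≪ ν.map Prod.swap ↔ μ ≪ ν := by
  refine ⟨fun h ↦ ?_, fun h ↦ h.map measurable_swap⟩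
  simpa [map_map measurable_swap measurable_swap] using h.map measurable_swap

lemma map_prodMk_absolutelyContinuous_prod_comm
    {Θ 𝒳 𝒴 : Type*} [MeasurableSpace Θ] [MeasurableSpace 𝒳] [MeasurableSpace 𝒴]
    (P : Measure Θ) [SFinite P] (X : Θ → 𝒳) (Y : Θ → 𝒴) (hX : Measurable X) (hY : Measurable Y) :
    P.map (fun θ => (X θ, Y θ)) ≪ (P.map X).prod (P.map Y) ↔
      P.map (fun θ => (Y θ, X θ)) ≪ (P.map Y).prod (P.map X) := by
  rw [← map_swap_absolutelyContinuous_map_swap_iff, prod_swap,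
    map_map measurable_swap (hX.prodMk hY)]
  rfl

end MeasureTheory.Measure

namespace ProbabilityTheory

lemma ae_condDistrib_absolutelyContinuous_iff
    {Θ 𝒳 𝒴 : Type*} [MeasurableSpace Θ] [MeasurableSpace 𝒳]
    [MeasurableSpace 𝒴] [StandardBorelSpace 𝒴] [Nonempty 𝒴]
    (P : Measure Θ) [IsFiniteMeasure P] (X : Θ → 𝒳) (Y : Θ → 𝒴) (hY : Measurable Y) :
    (∀ᵐ x ∂(P.map X), condDistrib Y X P x ≪ P.map Y) ↔
      P.map (fun θ => (X θ, Y θ)) ≪ (P.map X).prod (P.map Y) := by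
  rw [Measure.ae_absolutelyContinuous_iff_compProd_absolutelyContinuous_prod,
    compProd_map_condDistrib hY.aemeasurable]

end ProbabilityTheory

/-- For random variables `X`, `Y` with values in standard Borel spaces,
the following are equivalent: (a) `μ_{Y|X=x} ≪ μ_Y` for `μ_X`-a.e. `x`;
(b) `μ_{X|Y=y} ≪ μ_X` for `μ_Y`-a.e. `y`; (c) `μ_{X,Y} ≪ μ_X ⊗ μ_Y`. -/
theorem condDistrib_ac_iff_ac_iff_joint_ac
    {Θ 𝒳 𝒴 : Type*} [MeasurableSpace Θ]
    [MeasurableSpace 𝒳] [StandardBorelSpace 𝒳] [Nonempty 𝒳]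
    [MeasurableSpace 𝒴] [StandardBorelSpace 𝒴] [Nonempty 𝒴]
    (P : Measure Θ) [IsProbabilityMeasure P]
    (X : Θ → 𝒳) (Y : Θ → 𝒴) (hX : Measurable X) (hY : Measurable Y) :
    ((∀ᵐ x ∂(P.map X), condDistrib Y X P x ≪ P.map Y) ↔
        (∀ᵐ y ∂(P.map Y), condDistrib X Y P y ≪ P.map X)) ∧
      ((∀ᵐ x ∂(P.map X), condDistrib Y X P x ≪ P.map Y) ↔
        P.map (fun θ => (X θ, Y θ)) ≪ (P.map X).prod (P.map Y)) := by
  have hXY := ae_condDistrib_absolutelyContinuous_iff P X Y hY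
  have hYX := ae_condDistrib_absolutelyContinuous_iff P Y X hX
  refine ⟨?_, hXY⟩
  rw [hXY, hYX, Measure.map_prodMk_absolutelyContinuous_prod_comm P X Y hX hY]
end

section
/- Let (Θ, 𝓕, P) be a probability space, Ω a Polish space, and y, v: Θ → Ω random variables. Let Λ: Θ → [0,∞) be measurable with E[Λ] = 1, Λ > 0 P-a.s., and suppose E[Λ φ(y)] = E[φ(v)] for every bounded continuous φ: Ω → ℝ. Then the laws μ_y and μ_v are mutually absolutely continuous; moreover, if λ: Ω → [0,∞) is a measurable function with E(Λ | σ(y)) = λ(y) P-a.s., then dμ_v/dμ_y = λ holds μ_y-a.e., λ > 0 μ_y-a.e., and (dμ_y/dμ_v)(y) = 1/E(Λ | σ(y)) P-a.s. -/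
/-!
Write `Q` for `P` reweighted by `Λ`. The Girsanov identity says that `y` under `Q` and `v` under `P`
agree on bounded continuous functions, hence have the same law. Averaging `Λ` over the events
`{y ∈ s}` replaces it by `E(Λ | σ(y)) = λ(y)`, so the law of `y` under `Q` is `μ_y` with density `λ`;
thus `μ_v = λ • μ_y`. Since `Λ > 0` a.s., `P ≪ Q`, and pushing forward gives `μ_y ≪ μ_v`, which
in turn forces `λ > 0` `μ_y`-a.e. and `dμ_y/dμ_v = λ⁻¹`.
-/

open MeasureTheory
open scoped ENNReal BoundedContinuousFunction

namespace MeasureTheory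

variable {α : Type*} {mα : MeasurableSpace α} {μ : Measure α} {f : α → ℝ≥0∞}

theorem ae_ne_zero_of_absolutelyContinuous_withDensity (hf : AEMeasurable f μ)
    (h : μ ≪ μ.withDensity f) : ∀ᵐ x ∂μ, f x ≠ 0 :=
  h.ae_le ((ae_withDensity_iff' hf).2 (ae_of_all _ fun _ => id))

theorem Measure.rnDeriv_withDensity_right_self [SigmaFinite μ] (hf : AEMeasurable f μ)
    (hf_ne_zero : ∀ᵐ x ∂μ, f x ≠ 0) (hf_ne_top : ∀ᵐ x ∂μ, f x ≠ ∞) :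
    μ.rnDeriv (μ.withDensity f) =ᵐ[μ] fun x => (f x)⁻¹ := by
  filter_upwards [μ.rnDeriv_withDensity_right μ hf hf_ne_zero hf_ne_top, μ.rnDeriv_self]
    with x hx hself
  rw [hx, hself, mul_one]

variable {Θ Ω : Type*} [MeasurableSpace Θ] [MeasurableSpace Ω] {P : Measure Θ}
  {y v : Θ → Ω} {Λ : Θ → ℝ}

theorem map_eq_map_withDensity_of_forall_integral_mul_eq [TopologicalSpace Ω]
    [HasOuterApproxClosed Ω] [BorelSpace Ω] [IsFiniteMeasure P] (hy : Measurable y)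
    (hv : Measurable v) (hΛ : Integrable Λ P) (hΛ_nonneg : 0 ≤ᵐ[P] Λ)
    (h : ∀ φ : Ω →ᵇ ℝ, ∫ θ, Λ θ * φ (y θ) ∂P = ∫ θ, φ (v θ) ∂P) :
    P.map v = (P.withDensity fun θ => ENNReal.ofReal (Λ θ)).map y := by
  have : IsFiniteMeasure (P.withDensity fun θ => ENNReal.ofReal (Λ θ)) :=
    isFiniteMeasure_withDensity_ofReal hΛ.hasFiniteIntegral
  refine ext_of_forall_integral_eq_of_IsFiniteMeasure fun φ => ?_
  rw [integral_map hv.aemeasurable φ.continuous.aestronglyMeasurable,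
    integral_map hy.aemeasurable φ.continuous.aestronglyMeasurable,
    integral_withDensity_eq_integral_toReal_smul₀ hΛ.aemeasurable.ennreal_ofReal
      (ae_of_all _ fun _ => ENNReal.ofReal_lt_top), ← h φ]
  refine integral_congr_ae ?_
  filter_upwards [hΛ_nonneg] with θ hθ
  rw [ENNReal.toReal_ofReal hθ, smul_eq_mul]

theorem map_withDensity_eq_withDensity_of_condExp_comap_ae_eq [IsFiniteMeasure P]
    (hy : Measurable y) (hΛ : Integrable Λ P) (hΛ_nonneg : 0 ≤ᵐ[P] Λ) {lam : Ω → ℝ}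
    (hlam_meas : Measurable lam)
    (hlam : P[Λ | MeasurableSpace.comap y inferInstance] =ᵐ[P] fun θ => lam (y θ)) :
    (P.withDensity fun θ => ENNReal.ofReal (Λ θ)).map y
      = (P.map y).withDensity fun ω => ENNReal.ofReal (lam ω) := by
  have hlam_int : Integrable (fun θ => lam (y θ)) P := integrable_condExp.congr hlam
  have hlam_nonneg : 0 ≤ᵐ[P] fun θ => lam (y θ) := by
    filter_upwards [condExp_nonneg (m := MeasurableSpace.comap y inferInstance) hΛ_nonneg, hlam]
      with θ hθ hcond
    rwa [← hcond]
  ext s hs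
  rw [Measure.map_apply hy hs, withDensity_apply _ (hy hs), withDensity_apply _ hs,
    setLIntegral_map hs hlam_meas.ennreal_ofReal hy,
    ← ofReal_integral_eq_lintegral_ofReal hΛ.restrict (ae_restrict_of_ae hΛ_nonneg),
    ← ofReal_integral_eq_lintegral_ofReal hlam_int.restrict (ae_restrict_of_ae hlam_nonneg),
    ← setIntegral_condExp hy.comap_le hΛ ⟨s, hs, rfl⟩]
  exact congrArg ENNReal.ofReal (setIntegral_congr_ae (hy hs) (hlam.mono fun _ h _ => h))

end MeasureTheory

theorem girsanov_change_of_variable_rnDeriv_general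
    {Θ Ω : Type*} [MeasurableSpace Θ]
    [MetricSpace Ω] [MeasurableSpace Ω] [BorelSpace Ω]
    (P : Measure Θ) [IsProbabilityMeasure P]
    (y v : Θ → Ω) (hy : Measurable y) (hv : Measurable v)
    (Λ : Θ → ℝ) (hΛnonneg : ∀ θ, 0 ≤ Λ θ)
    (hΛmean : ∫ θ, Λ θ ∂P = 1) (hΛpos : ∀ᵐ θ ∂P, 0 < Λ θ)
    (hgirsanov : ∀ φ : Ω → ℝ, Continuous φ → (∃ C, ∀ ω, |φ ω| ≤ C) →
      ∫ θ, Λ θ * φ (y θ) ∂P = ∫ θ, φ (v θ) ∂P)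
    (lam : Ω → ℝ) (hlam_meas : Measurable lam)
    (hlam : (P[Λ | MeasurableSpace.comap y inferInstance]) =ᵐ[P] fun θ => lam (y θ)) :
    (P.map v ≪ P.map y ∧ P.map y ≪ P.map v) ∧
      (∀ᵐ ω ∂(P.map y), (P.map v).rnDeriv (P.map y) ω = ENNReal.ofReal (lam ω)) ∧
      (∀ᵐ ω ∂(P.map y), 0 < lam ω) ∧
      (∀ᵐ θ ∂P, (P.map y).rnDeriv (P.map v) (y θ)
        = (ENNReal.ofReal ((P[Λ | MeasurableSpace.comap y inferInstance]) θ))⁻¹) := by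
  have hΛ : Integrable Λ P := integrable_of_integral_eq_one hΛmean
  have hΛ_nonneg : 0 ≤ᵐ[P] Λ := ae_of_all _ hΛnonneg
  have hg : Measurable fun ω => ENNReal.ofReal (lam ω) := hlam_meas.ennreal_ofReal
  have hQy := map_withDensity_eq_withDensity_of_condExp_comap_ae_eq hy hΛ hΛ_nonneg hlam_meas hlam
  have hlaw : P.map v = (P.map y).withDensity fun ω => ENNReal.ofReal (lam ω) :=
    (map_eq_map_withDensity_of_forall_integral_mul_eq hy hv hΛ hΛ_nonneg fun φ =>
      hgirsanov φ φ.continuous ⟨‖φ‖, fun ω => φ.norm_coe_le_norm ω⟩).trans hQy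
  have hPQ : P ≪ P.withDensity fun θ => ENNReal.ofReal (Λ θ) :=
    withDensity_absolutelyContinuous' hΛ.aemeasurable.ennreal_ofReal
      (hΛpos.mono fun _ h => by simpa using h)
  have hyv : P.map y ≪ P.map v := by
    rw [hlaw, ← hQy]
    exact hPQ.map hy
  have hlam_pos : ∀ᵐ ω ∂(P.map y), 0 < lam ω := by
    filter_upwards [ae_ne_zero_of_absolutelyContinuous_withDensity hg.aemeasurable
      (hlaw ▸ hyv)] with ω hω
    simpa using hω
  have hrn : ∀ᵐ ω ∂(P.map y), (P.map y).rnDeriv (P.map v) ω = (ENNReal.ofReal (lam ω))⁻¹ := by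
    rw [hlaw]
    exact Measure.rnDeriv_withDensity_right_self hg.aemeasurable
      (hlam_pos.mono fun _ h => by simpa using h) (ae_of_all _ fun _ => ENNReal.ofReal_ne_top)
  refine ⟨⟨hlaw ▸ withDensity_absolutelyContinuous _ _, hyv⟩,
    hlaw ▸ Measure.rnDeriv_withDensity _ hg, hlam_pos, ?_⟩
  filter_upwards [ae_of_ae_map hy.aemeasurable hrn, hlam] with θ hθ hcond
  rw [hθ, hcond]

/-- If `Λ ≥ 0` has `E[Λ] = 1`, `Λ > 0` a.s., and `E[Λ φ(y)] = E[φ(v)]` for all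
bounded continuous `φ`, then the laws of `y` and `v` are mutually absolutely continuous, and if
`λ` represents `E(Λ | σ(y))` via `λ(y)`, then `dμ_v/dμ_y = λ` holds `μ_y`-a.e., `λ > 0` `μ_y`-a.e.,
and `(dμ_y/dμ_v)(y) = 1/E(Λ | σ(y))` `P`-a.s. -/
theorem girsanov_change_of_variable_rnDeriv
    {Θ Ω : Type*} [MeasurableSpace Θ]
    [MetricSpace Ω] [PolishSpace Ω] [MeasurableSpace Ω] [BorelSpace Ω]
    (P : Measure Θ) [IsProbabilityMeasure P]
    (y v : Θ → Ω) (hy : Measurable y) (hv : Measurable v)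
    (Λ : Θ → ℝ) (hΛmeas : Measurable Λ) (hΛnonneg : ∀ θ, 0 ≤ Λ θ)
    (hΛmean : ∫ θ, Λ θ ∂P = 1) (hΛpos : ∀ᵐ θ ∂P, 0 < Λ θ)
    (hgirsanov : ∀ φ : Ω → ℝ, Continuous φ → (∃ C, ∀ ω, |φ ω| ≤ C) →
      ∫ θ, Λ θ * φ (y θ) ∂P = ∫ θ, φ (v θ) ∂P)
    (lam : Ω → ℝ) (hlam_meas : Measurable lam)
    (hlam : (P[Λ | MeasurableSpace.comap y inferInstance]) =ᵐ[P] fun θ => lam (y θ)) :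
    (P.map v ≪ P.map y ∧ P.map y ≪ P.map v) ∧
      (∀ᵐ ω ∂(P.map y), (P.map v).rnDeriv (P.map y) ω = ENNReal.ofReal (lam ω)) ∧
      (∀ᵐ ω ∂(P.map y), 0 < lam ω) ∧
      (∀ᵐ θ ∂P, (P.map y).rnDeriv (P.map v) (y θ)
        = (ENNReal.ofReal ((P[Λ | MeasurableSpace.comap y inferInstance]) θ))⁻¹) :=
  girsanov_change_of_variable_rnDeriv_general P y v hy hv Λ hΛnonneg hΛmean hΛpos hgirsanov lam
    hlam_meas hlam
end

section
/- Let (ξ_i)_{i∈ℕ} and (ω_i)_{i∈ℕ} be real random variables on a probability space such that the combined family {ξ_i, ω_i : i ∈ ℕ} is independent and each has law N(0,1). Let (λ_i)_{i∈ℕ} be nonnegative reals with Σ_i λ_i < ∞, let γ > 0, set η_i = √γ √λ_i ξ_i + ω_i, and let 𝒢 = σ(η_i, i ∈ ℕ). Then Σ_{i∈ℕ} E[(√λ_i ξ_i − E(√λ_i ξ_i | 𝒢))²] = Σ_{i∈ℕ} λ_i / (1 + λ_i γ). -/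
open MeasureTheory ProbabilityTheory

/-! Fix a coordinate `i` and put `a = √γ √λ_i`. The innovation `V = ξ_i - a ω_i` is uncorrelated
with every observation `η_j = √γ √λ_j ξ_j + ω_j` (for `j = i` the two contributions `a` and `-a`
cancel), and all these variables are linear in the jointly Gaussian family `(ξ, ω)`; hence `V` is
independent of `𝒢`. Since `√λ_i ξ_i = (a √λ_i / (1 + a²)) η_i + (√λ_i / (1 + a²)) V`, conditioning
on `𝒢` keeps the first summand and replaces the second by its mean `0`, so the error is the variance
of the second summand, `λ_i / (1 + a²)² · (1 + a²) = λ_i / (1 + λ_i γ)`. -/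

namespace ProbabilityTheory

variable {Ω : Type*} {mΩ : MeasurableSpace Ω} {P : Measure Ω}

lemma hasLaw_sum_elim {ι κ 𝓧 : Type*} {m𝓧 : MeasurableSpace 𝓧} {μ : Measure 𝓧}
    {X : ι → Ω → 𝓧} {Y : κ → Ω → 𝓧} (hX : ∀ i, HasLaw (X i) μ P) (hY : ∀ k, HasLaw (Y k) μ P) :
    ∀ l, HasLaw (Sum.elim X Y l) μ P
  | .inl i => hX i
  | .inr k => hY k

lemma iIndepFun.isGaussianProcess {ι E : Type*} [NormedAddCommGroup E] [NormedSpace ℝ E]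
    [MeasurableSpace E] [BorelSpace E] [CompleteSpace E] [SecondCountableTopology E]
    {X : ι → Ω → E} (hX : ∀ i, HasGaussianLaw (X i) P) (hind : iIndepFun X P) :
    IsGaussianProcess X P where
  hasGaussianLaw _ :=
    iIndepFun.hasGaussianLaw (fun i => hX i) (hind.precomp Subtype.val_injective)

lemma IsGaussianProcess.const_mul_add_const_mul {S T : Type*} {W : T → Ω → ℝ}
    (hW : IsGaussianProcess W P) (f g : S → T) (a b : S → ℝ) :
    IsGaussianProcess (fun s θ => a s * W (f s) θ + b s * W (g s) θ) P := by
  classical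
  exact hW.of_isGaussianProcess fun s => ⟨{f s, g s},
    a s • ContinuousLinearMap.proj ⟨f s, by simp⟩ + b s • ContinuousLinearMap.proj ⟨g s, by simp⟩,
    fun θ => by simp⟩

lemma iIndepFun.covariance_eq_ite {ι : Type*} [DecidableEq ι] {X : ι → Ω → ℝ}
    (hind : iIndepFun X P) (hX : ∀ i, MemLp (X i) 2 P) (i j : ι) :
    cov[X i, X j; P] = if i = j then Var[X i; P] else 0 := by
  have := hind.isProbabilityMeasure
  split_ifs with hij
  · subst hij
    exact covariance_self (hX i).aemeasurable
  · exact (hind.indepFun hij).covariance_eq_zero (hX i) (hX j)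

lemma IsGaussianProcess.indep_iSup_comap_of_covariance_eq_zero {S : Type*} {X : S → Ω → ℝ}
    {Y : Ω → ℝ} (hXY : IsGaussianProcess (Sum.elim X fun _ : Unit => Y) P)
    (hX : ∀ s, AEMeasurable (X s) P) (hY : AEMeasurable Y P) (h : ∀ s, cov[X s, Y; P] = 0) :
    Indep (⨆ s, MeasurableSpace.comap (X s) inferInstance)
      (MeasurableSpace.comap Y inferInstance) P := by
  have hind := hXY.indepFun_of_covariance_eq_zero hX (fun _ => hY) fun s _ => h s
  rw [IndepFun_iff_Indep, MeasurableSpace.comap_process_pi] at hind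
  exact indep_of_indep_of_le_right hind
    (MeasurableSpace.comap_le_comap_pi (g := fun _ : Unit => Y) ())

lemma integral_sq_sub_condExp_eq_variance [IsFiniteMeasure P] {m : MeasurableSpace Ω}
    (hm : m ≤ mΩ) {X Y Z : Ω → ℝ} (hXYZ : X = Y + Z) (hY : StronglyMeasurable[m] Y)
    (hYint : Integrable Y P) (hZ : Measurable[mΩ] Z) (hZint : Integrable Z P)
    (hind : Indep (MeasurableSpace.comap Z inferInstance) m P) :
    ∫ θ, (X θ - P[X | m] θ) ^ 2 ∂P = Var[Z; P] := by
  have hZ_cond : P[Z | m] =ᵐ[P] fun _ => P[Z] :=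
    condExp_indep_eq hZ.comap_le hm (comap_measurable Z).stronglyMeasurable hind
  subst hXYZ
  have hX_cond : P[Y + Z | m] =ᵐ[P] Y + fun _ => P[Z] := by
    refine (condExp_add hYint hZint m).trans ?_
    rw [condExp_of_stronglyMeasurable hm hY hYint]
    exact hZ_cond.add_left
  rw [variance_eq_integral hZ.aemeasurable]
  refine integral_congr_ae ?_
  filter_upwards [hX_cond] with θ hθ
  rw [hθ, Pi.add_apply, Pi.add_apply]
  ring

lemma covariance_eq_ite_of_iIndepFun_gaussianReal {ι : Type*} [DecidableEq ι] {W : ι → Ω → ℝ}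
    (hW : ∀ i, HasLaw (W i) (gaussianReal 0 1) P) (hind : iIndepFun W P) (i j : ι) :
    cov[W i, W j; P] = if i = j then 1 else 0 := by
  rw [hind.covariance_eq_ite (fun k => (hW k).hasGaussianLaw.memLp_two), (hW i).variance_eq,
    variance_id_gaussianReal, NNReal.coe_one]

section GaussianCoordinates

variable {ξ ω : ℕ → Ω → ℝ}

lemma covariance_linear_coordinates (hξ : ∀ i, HasLaw (ξ i) (gaussianReal 0 1) P)
    (hω : ∀ i, HasLaw (ω i) (gaussianReal 0 1) P) (hind : iIndepFun (Sum.elim ξ ω) P)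
    (a b c d : ℝ) (j k : ℕ) :
    cov[fun θ => a * ξ j θ + b * ω j θ, fun θ => c * ξ k θ + d * ω k θ; P]
      = if j = k then a * c + b * d else 0 := by
  have := hind.isProbabilityMeasure
  have hW := hasLaw_sum_elim hξ hω
  have hcov := covariance_eq_ite_of_iIndepFun_gaussianReal hW hind
  have hL2 : ∀ l, MemLp (Sum.elim ξ ω l) 2 P := fun l => (hW l).hasGaussianLaw.memLp_two
  have hξ2 : ∀ l, MemLp (ξ l) 2 P := fun l => hL2 (.inl l)
  have hω2 : ∀ l, MemLp (ω l) 2 P := fun l => hL2 (.inr l)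
  change cov[(fun θ => a * ξ j θ) + (fun θ => b * ω j θ),
    (fun θ => c * ξ k θ) + (fun θ => d * ω k θ); P] = _
  rw [covariance_add_left ((hξ2 j).const_mul a) ((hω2 j).const_mul b)
      (((hξ2 k).const_mul c).add ((hω2 k).const_mul d)),
    covariance_add_right ((hξ2 j).const_mul a) ((hξ2 k).const_mul c) ((hω2 k).const_mul d),
    covariance_add_right ((hω2 j).const_mul b) ((hξ2 k).const_mul c) ((hω2 k).const_mul d)]
  simp only [covariance_const_mul_left, covariance_const_mul_right]
  have hξξ := hcov (.inl j) (.inl k)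
  have hξω := hcov (.inl j) (.inr k)
  have hωξ := hcov (.inr j) (.inl k)
  have hωω := hcov (.inr j) (.inr k)
  simp only [Sum.elim_inl, Sum.elim_inr, Sum.inl.injEq, Sum.inr.injEq, reduceCtorEq,
    if_false] at hξξ hξω hωξ hωω
  rw [hξξ, hξω, hωξ, hωω]
  split_ifs <;> ring

lemma indep_iSup_comap_observation_innovation (hξ : ∀ i, HasLaw (ξ i) (gaussianReal 0 1) P)
    (hω : ∀ i, HasLaw (ω i) (gaussianReal 0 1) P) (hind : iIndepFun (Sum.elim ξ ω) P)
    (A : ℕ → ℝ) (i : ℕ) :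
    Indep (⨆ j, MeasurableSpace.comap (fun θ => A j * ξ j θ + ω j θ) inferInstance)
      (MeasurableSpace.comap (fun θ => ξ i θ - A i * ω i θ) inferInstance) P := by
  have hW := hasLaw_sum_elim hξ hω
  have hGP : IsGaussianProcess (Sum.elim (fun j θ => A j * ξ j θ + ω j θ)
      fun (_ : Unit) θ => ξ i θ - A i * ω i θ) P := by
    convert (iIndepFun.isGaussianProcess (fun k => (hW k).hasGaussianLaw) hind
      ).const_mul_add_const_mul (Sum.elim .inl fun _ => .inl i) (Sum.elim .inr fun _ => .inr i)
      (Sum.elim A 1) (Sum.elim 1 fun _ => -A i) using 1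
    ext (j | _) θ <;> simp [sub_eq_add_neg]
  refine hGP.indep_iSup_comap_of_covariance_eq_zero (fun j => ?_) ?_ fun j => ?_
  · exact ((hξ j).aemeasurable.const_mul _).add (hω j).aemeasurable
  · exact (hξ i).aemeasurable.sub ((hω i).aemeasurable.const_mul _)
  · have h := covariance_linear_coordinates hξ hω hind (A j) 1 1 (-A i) j i
    simp only [one_mul, mul_one, neg_mul, ← sub_eq_add_neg] at h
    rw [h, ite_eq_right_iff]
    rintro rfl
    exact sub_self _

lemma integral_sq_sub_condExp_observations (hξm : ∀ i, Measurable (ξ i))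
    (hωm : ∀ i, Measurable (ω i)) (hξ : ∀ i, HasLaw (ξ i) (gaussianReal 0 1) P)
    (hω : ∀ i, HasLaw (ω i) (gaussianReal 0 1) P) (hind : iIndepFun (Sum.elim ξ ω) P)
    (A : ℕ → ℝ) (i : ℕ) (c : ℝ) :
    ∫ θ, (c * ξ i θ - P[fun θ => c * ξ i θ |
        ⨆ j, MeasurableSpace.comap (fun θ => A j * ξ j θ + ω j θ) inferInstance] θ) ^ 2 ∂P
      = c ^ 2 / (1 + A i ^ 2) := by
  have := hind.isProbabilityMeasure
  set η : ℕ → Ω → ℝ := fun j θ => A j * ξ j θ + ω j θ with hη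
  set V : Ω → ℝ := fun θ => ξ i θ - A i * ω i θ with hV
  have hle : (⨆ j, MeasurableSpace.comap (η j) inferInstance) ≤ mΩ :=
    iSup_le fun j => (((hξm j).const_mul _).add (hωm j)).comap_le
  have hηi : Measurable[⨆ j, MeasurableSpace.comap (η j) inferInstance] (η i) :=
    measurable_iff_comap_le.2 (le_iSup (fun j => MeasurableSpace.comap (η j) inferInstance) i)
  have hξ1 : ∀ j, Integrable (ξ j) P := fun j => (hξ j).hasGaussianLaw.integrable
  have hω1 : ∀ j, Integrable (ω j) P := fun j => (hω j).hasGaussianLaw.integrable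
  have hVV : Var[V; P] = 1 + A i ^ 2 := by
    rw [← covariance_self (X := V) ((hξ i).aemeasurable.sub ((hω i).aemeasurable.const_mul _))]
    have h := covariance_linear_coordinates hξ hω hind 1 (-A i) 1 (-A i) i i
    simp only [one_mul, neg_mul, ← sub_eq_add_neg, if_true] at h
    rw [h]
    ring
  rw [integral_sq_sub_condExp_eq_variance hle
      (Y := fun θ => c * A i / (1 + A i ^ 2) * η i θ) (Z := fun θ => c / (1 + A i ^ 2) * V θ)
      (by ext θ; simp only [hη, hV, Pi.add_apply]; field_simp; ring)
      (hηi.const_mul _).stronglyMeasurable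
      ((((hξ1 i).const_mul _).add (hω1 i)).const_mul _)
      (((hξm i).sub ((hωm i).const_mul _)).const_mul _)
      (((hξ1 i).sub ((hω1 i).const_mul _)).const_mul _)
      (indep_of_indep_of_le_left
        (indep_iSup_comap_observation_innovation hξ hω hind A i).symm
        (measurable_iff_comap_le.1 ((comap_measurable V).const_mul _))),
    variance_const_mul, hVV]
  field_simp

end GaussianCoordinates

end ProbabilityTheory

theorem noncausal_error_gaussian_coordinates_general
    {Θ : Type*} [mΘ : MeasurableSpace Θ] (P : Measure Θ)
    (ξ ω : ℕ → Θ → ℝ) (hξm : ∀ i, Measurable (ξ i)) (hωm : ∀ i, Measurable (ω i))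
    (hindep : iIndepFun
      (Sum.elim ξ ω) P)
    (hξlaw : ∀ i, P.map (ξ i) = gaussianReal 0 1)
    (hωlaw : ∀ i, P.map (ω i) = gaussianReal 0 1)
    (lam : ℕ → ℝ) (hlam : ∀ i, 0 ≤ lam i)
    (γ : ℝ) (hγ : 0 < γ)
    (η : ℕ → Θ → ℝ)
    (hη : ∀ i, η i = fun θ => Real.sqrt γ * Real.sqrt (lam i) * ξ i θ + ω i θ) :
    ∑' i, ∫ θ, (Real.sqrt (lam i) * ξ i θ
        - (P[fun θ => Real.sqrt (lam i) * ξ i θ |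
            ⨆ j, MeasurableSpace.comap (η j) inferInstance]) θ) ^ 2 ∂P
      = ∑' i, lam i / (1 + lam i * γ) := by
  obtain rfl : η = fun i θ => Real.sqrt γ * Real.sqrt (lam i) * ξ i θ + ω i θ := funext hη
  refine tsum_congr fun i => ?_
  rw [integral_sq_sub_condExp_observations hξm hωm (fun i => ⟨(hξm i).aemeasurable, hξlaw i⟩)
    (fun i => ⟨(hωm i).aemeasurable, hωlaw i⟩) hindep (fun j => Real.sqrt γ * Real.sqrt (lam j)) i,
    mul_pow, Real.sq_sqrt hγ.le, Real.sq_sqrt (hlam i), mul_comm γ]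

/-- With `{ξ_i, ω_i}` a jointly independent family of standard Gaussians,
`Σ_i λ_i < ∞`, `γ > 0`, `η_i = √γ √λ_i ξ_i + ω_i`, and `𝒢 = σ(η_i, i ∈ ℕ)`, the total
mean square estimation error is `Σ_i E[(√λ_i ξ_i − E(√λ_i ξ_i | 𝒢))²] = Σ_i λ_i / (1 + λ_i γ)`. -/
theorem noncausal_error_gaussian_coordinates
    {Θ : Type*} [mΘ : MeasurableSpace Θ] (P : Measure Θ) [IsProbabilityMeasure P]
    (ξ ω : ℕ → Θ → ℝ) (hξm : ∀ i, Measurable (ξ i)) (hωm : ∀ i, Measurable (ω i))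
    (hindep : iIndepFun
      (Sum.elim ξ ω) P)
    (hξlaw : ∀ i, P.map (ξ i) = gaussianReal 0 1)
    (hωlaw : ∀ i, P.map (ω i) = gaussianReal 0 1)
    (lam : ℕ → ℝ) (hlam : ∀ i, 0 ≤ lam i) (hsum : Summable lam)
    (γ : ℝ) (hγ : 0 < γ)
    (η : ℕ → Θ → ℝ)
    (hη : ∀ i, η i = fun θ => Real.sqrt γ * Real.sqrt (lam i) * ξ i θ + ω i θ) :
    ∑' i, ∫ θ, (Real.sqrt (lam i) * ξ i θ
        - (P[fun θ => Real.sqrt (lam i) * ξ i θ |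
            ⨆ j, MeasurableSpace.comap (η j) inferInstance]) θ) ^ 2 ∂P
      = ∑' i, lam i / (1 + lam i * γ) :=
  noncausal_error_gaussian_coordinates_general (mΘ := mΘ) P ξ ω hξm hωm hindep hξlaw hωlaw lam hlam
    γ hγ η hη
end

section
/- Let f: (0, ∞) → ℝ be nonnegative, nonincreasing, and integrable on (0, γ) for every γ > 0. Then the function h: (0, ∞) → ℝ defined by h(η) = η ∫₀^{1/η} f(β) dβ is concave on (0, ∞). -/
open MeasureTheory

private lemma key_supporting
    (f : ℝ → ℝ)
    (hf_anti : AntitoneOn f (Set.Ioi (0 : ℝ)))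
    (hf_int : ∀ γ : ℝ, 0 < γ → IntervalIntegrable f volume 0 γ)
    {γ c : ℝ} (hγ : 0 < γ) (hc : 0 < c) :
    (∫ β in (0 : ℝ)..c, f β) ≤ (∫ β in (0 : ℝ)..γ, f β) + f γ * (c - γ) := by
  have hsub : (∫ β in (0 : ℝ)..c, f β) - (∫ β in (0 : ℝ)..γ, f β)
      = ∫ β in γ..c, f β :=
    intervalIntegral.integral_interval_sub_left (hf_int c hc) (hf_int γ hγ)
  have hint : IntervalIntegrable f volume γ c :=
    ((hf_int γ hγ).symm.trans (hf_int c hc))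
  have hmain : (∫ β in γ..c, f β) ≤ f γ * (c - γ) := by
    rcases le_total γ c with hle | hle
    · have hmono : ∫ β in γ..c, f β ≤ ∫ _ in γ..c, f γ := by
        apply intervalIntegral.integral_mono_on hle hint intervalIntegrable_const
        intro x hx
        exact hf_anti hγ (lt_of_lt_of_le hγ hx.1) hx.1
      calc (∫ β in γ..c, f β) ≤ ∫ _ in γ..c, f γ := hmono
        _ = (c - γ) * f γ := by simp [smul_eq_mul]
        _ = f γ * (c - γ) := mul_comm _ _
    · have hmono : ∫ _ in c..γ, f γ ≤ ∫ β in c..γ, f β := by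
        apply intervalIntegral.integral_mono_on hle intervalIntegrable_const hint.symm
        intro x hx
        exact hf_anti (lt_of_lt_of_le hc hx.1) hγ hx.2
      have h1 : (γ - c) * f γ ≤ ∫ β in c..γ, f β := by
        simpa [smul_eq_mul] using hmono
      have h2 : (∫ β in γ..c, f β) = -∫ β in c..γ, f β :=
        (intervalIntegral.integral_symm c γ)
      rw [h2]
      nlinarith [h1]
  linarith [hsub, hmain]

/-- If `f : (0, ∞) → ℝ` is nonnegative, nonincreasing, and integrable on
`(0, γ)` for every `γ > 0`, then `h(η) = η ∫₀^{1/η} f(β) dβ` is concave on `(0, ∞)`. -/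
theorem concave_causal_error_in_noise_to_signal
    (f : ℝ → ℝ)
    (hf_nonneg : ∀ β ∈ Set.Ioi (0 : ℝ), 0 ≤ f β)
    (hf_anti : AntitoneOn f (Set.Ioi (0 : ℝ)))
    (hf_int : ∀ γ : ℝ, 0 < γ → IntervalIntegrable f volume 0 γ)
    (h : ℝ → ℝ)
    (hh : ∀ η ∈ Set.Ioi (0 : ℝ), h η = η * ∫ β in (0 : ℝ)..(1 / η), f β) :
    ConcaveOn ℝ (Set.Ioi (0 : ℝ)) h := by
  set F : ℝ → ℝ := fun c => ∫ β in (0 : ℝ)..c, f β with hF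
  -- supporting affine upper bound: for x, γ > 0,  h x ≤ (F γ - γ * f γ) * x + f γ
  have hUB : ∀ x : ℝ, 0 < x → ∀ γ : ℝ, 0 < γ →
      h x ≤ (F γ - γ * f γ) * x + f γ := by
    intro x hx γ hγ
    have hinv : (0 : ℝ) < 1 / x := by positivity
    have hk := key_supporting f hf_anti hf_int hγ hinv
    rw [hh x (Set.mem_Ioi.mpr hx)]
    have : x * F (1 / x) ≤ x * (F γ + f γ * (1 / x - γ)) := by
      exact mul_le_mul_of_nonneg_left hk (le_of_lt hx)
    have hx' : x * (1 / x) = 1 := mul_one_div_cancel (ne_of_gt hx)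
    calc x * F (1 / x) ≤ x * (F γ + f γ * (1 / x - γ)) := this
      _ = (F γ - γ * f γ) * x + f γ := by field_simp; ring
  constructor
  · exact convex_Ioi 0
  · intro x hx y hy a b ha hb hab
    simp only [smul_eq_mul] at *
    set η := a * x + b * y with hη
    have hx0 : (0 : ℝ) < x := hx
    have hy0 : (0 : ℝ) < y := hy
    have hη0 : (0 : ℝ) < η := by
      rcases eq_or_lt_of_le ha with h0 | h0
      · have : b = 1 := by linarith
        simp [hη, ← h0, this]; linarith
      · nlinarith
    set γ := 1 / η with hγdef
    have hγ0 : (0 : ℝ) < γ := by positivity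
    -- equality at γ = 1/η
    have heq : h η = (F γ - γ * f γ) * η + f γ := by
      rw [hh η (Set.mem_Ioi.mpr hη0)]
      have hγη : γ * η = 1 := by
        rw [hγdef]; field_simp
      have hFγ : F γ = ∫ β in (0 : ℝ)..(1 / η), f β := by rw [hγdef]
      rw [← hFγ]
      linear_combination f γ * hγη
    have h1 := hUB x hx0 γ hγ0
    have h2 := hUB y hy0 γ hγ0
    have hsum : a * ((F γ - γ * f γ) * x + f γ) + b * ((F γ - γ * f γ) * y + f γ)
        = (F γ - γ * f γ) * η + f γ := by
      simp only [hη]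
      linear_combination f γ * hab
    have ha1 := mul_le_mul_of_nonneg_left h1 ha
    have hb1 := mul_le_mul_of_nonneg_left h2 hb
    show a * h x + b * h y ≤ h η
    rw [heq]
    linarith
end

section
/- Let (λ_i)_{i∈ℕ} be nonnegative reals with Σ_i λ_i < ∞ and not all λ_i equal to zero. Define for γ > 0: ε̂²(γ) = γ^{-1} Σ_i log(1 + λ_i γ) and ε̃²(γ) = Σ_i λ_i/(1 + λ_i γ), and let s₁ = Σ_i λ_i. Then lim_{γ → 0⁺} (s₁ − ε̂²(γ)) / (s₁ − ε̃²(γ)) = 1/2, that is, lim_{γ → 0⁺} (s₁ − ε̃²(γ)) / (s₁ − ε̂²(γ)) = 2. -/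
open Filter

/-- Taylor bounds for `y - log(1+y)` when `0 ≤ y ≤ 1/2`. -/
lemma log_taylor_bound {y : ℝ} (h0 : 0 ≤ y) (h1 : y ≤ 1/2) :
    y*y/2 - 2*y^3 ≤ y - Real.log (1 + y) ∧ y - Real.log (1 + y) ≤ y*y/2 + 2*y^3 := by
  have hx : |(-y)| < 1 := by rw [abs_neg, abs_of_nonneg h0]; linarith
  have h := Real.abs_log_sub_add_sum_range_le hx 2
  rw [abs_neg, abs_of_nonneg h0] at h
  simp [Finset.sum_range_succ] at h
  rw [abs_le] at h
  have h3 : y ^ 3 / (1 - y) ≤ 2 * y ^ 3 := by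
    rw [div_le_iff₀ (by linarith)]
    nlinarith [pow_nonneg h0 3]
  constructor <;> nlinarith [h.1, h.2]

/-- For nonnegative summable `(λ_i)` not all zero, with causal error
`ε̂²(γ) = γ⁻¹ Σ_i log(1 + λ_i γ)`, noncausal error `ε̃²(γ) = Σ_i λ_i/(1 + λ_i γ)` and
`s₁ = Σ_i λ_i`, one has `lim_{γ → 0⁺} (s₁ − ε̃²(γ)) / (s₁ − ε̂²(γ)) = 2`. -/
theorem small_snr_ratio_of_errors
    (lam : ℕ → ℝ) (hlam : ∀ i, 0 ≤ lam i) (hsum : Summable lam)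
    (hne : ∃ i, lam i ≠ 0) :
    Tendsto
      (fun γ : ℝ =>
        ((∑' i, lam i) - ∑' i, lam i / (1 + lam i * γ)) /
          ((∑' i, lam i) - γ⁻¹ * ∑' i, Real.log (1 + lam i * γ)))
      (nhdsWithin 0 (Set.Ioi 0)) (nhds 2) := by
  obtain ⟨i₀, hi₀⟩ := hne
  have hi₀pos : 0 < lam i₀ := lt_of_le_of_ne (hlam i₀) (Ne.symm hi₀)
  set s1 : ℝ := ∑' i, lam i with hs1def
  have hle : ∀ i, lam i ≤ s1 := fun i => Summable.le_tsum hsum i fun j _ => hlam j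
  have hs1pos : 0 < s1 := lt_of_lt_of_le hi₀pos (hle i₀)
  have hsum2 : Summable (fun i => lam i ^ 2) := by
    apply Summable.of_nonneg_of_le (fun i => by positivity)
      (fun i => ?_) (hsum.mul_left s1)
    have := hle i
    nlinarith [hlam i]
  have hsum3 : Summable (fun i => lam i ^ 3) := by
    apply Summable.of_nonneg_of_le (fun i => pow_nonneg (hlam i) 3)
      (fun i => ?_) (hsum2.mul_left s1)
    have := hle i
    nlinarith [hlam i, sq_nonneg (lam i)]
  set s2 : ℝ := ∑' i, lam i ^ 2 with hs2def
  set s3 : ℝ := ∑' i, lam i ^ 3 with hs3def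
  have hs2pos : 0 < s2 := by
    have : lam i₀ ^ 2 ≤ s2 := Summable.le_tsum hsum2 i₀ fun j _ => by positivity
    nlinarith
  have hs3nonneg : 0 ≤ s3 := tsum_nonneg fun i => pow_nonneg (hlam i) 3
  -- auxiliary functions
  set A : ℝ → ℝ := fun γ => ∑' i, lam i ^ 2 / (1 + lam i * γ) with hAdef
  set C : ℝ → ℝ := fun γ => γ⁻¹ * γ⁻¹ * ∑' i, (lam i * γ - Real.log (1 + lam i * γ)) with hCdef
  -- basic positivity for γ > 0
  have hden : ∀ (γ : ℝ), 0 < γ → ∀ i, (0:ℝ) < 1 + lam i * γ := fun γ hγ i => by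
    have := hlam i; nlinarith
  -- summability facts for γ > 0
  have hsumA : ∀ (γ : ℝ), 0 < γ → Summable (fun i => lam i ^ 2 / (1 + lam i * γ)) := by
    intro γ hγ
    apply Summable.of_nonneg_of_le
      (fun i => div_nonneg (sq_nonneg _) (hden γ hγ i).le) (fun i => ?_) hsum2
    rw [div_le_iff₀ (hden γ hγ i)]
    nlinarith [mul_nonneg (sq_nonneg (lam i)) (mul_nonneg (hlam i) hγ.le)]
  have hsumlog : ∀ (γ : ℝ), 0 < γ → Summable (fun i => Real.log (1 + lam i * γ)) := by
    intro γ hγ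
    apply Summable.of_nonneg_of_le (fun i => ?_) (fun i => ?_) (hsum.mul_right γ)
    · exact Real.log_nonneg (by nlinarith [hlam i])
    · have := Real.log_le_sub_one_of_pos (hden γ hγ i)
      linarith
  have hsumf : ∀ (γ : ℝ), 0 < γ → Summable (fun i => lam i * γ - Real.log (1 + lam i * γ)) :=
    fun γ hγ => (hsum.mul_right γ).sub (hsumlog γ hγ)
  have hsumdiv : ∀ (γ : ℝ), 0 < γ → Summable (fun i => lam i / (1 + lam i * γ)) := by
    intro γ hγ
    apply Summable.of_nonneg_of_le
      (fun i => div_nonneg (hlam i) (hden γ hγ i).le) (fun i => ?_) hsum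
    rw [div_le_iff₀ (hden γ hγ i)]
    nlinarith [mul_nonneg (hlam i) (mul_nonneg (hlam i) hγ.le)]
  -- A tends to s2
  have hA : Tendsto A (nhdsWithin 0 (Set.Ioi 0)) (nhds s2) := by
    apply tendsto_of_tendsto_of_tendsto_of_le_of_le'
      (g := fun γ : ℝ => s2 - s3 * γ) (h := fun _ : ℝ => s2)
    · have : Tendsto (fun γ : ℝ => s2 - s3 * γ) (nhds 0) (nhds (s2 - s3 * 0)) := by
        exact (tendsto_const_nhds.sub (tendsto_const_nhds.mul tendsto_id))
      simpa using this.mono_left nhdsWithin_le_nhds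
    · exact tendsto_const_nhds
    · filter_upwards [self_mem_nhdsWithin] with γ hγ
      rw [Set.mem_Ioi] at hγ
      have step : ∀ i, lam i ^ 2 - lam i ^ 3 * γ ≤ lam i ^ 2 / (1 + lam i * γ) := by
        intro i
        rw [le_div_iff₀ (hden γ hγ i)]
        nlinarith [hlam i, sq_nonneg (lam i * γ), pow_nonneg (hlam i) 2]
      calc s2 - s3 * γ = ∑' i, (lam i ^ 2 - lam i ^ 3 * γ) := by
            rw [Summable.tsum_sub hsum2 (hsum3.mul_right γ), tsum_mul_right]
        _ ≤ A γ := Summable.tsum_le_tsum step (hsum2.sub (hsum3.mul_right γ)) (hsumA γ hγ)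
    · filter_upwards [self_mem_nhdsWithin] with γ hγ
      rw [Set.mem_Ioi] at hγ
      apply Summable.tsum_le_tsum (fun i => ?_) (hsumA γ hγ) hsum2
      rw [div_le_iff₀ (hden γ hγ i)]
      nlinarith [mul_nonneg (sq_nonneg (lam i)) (mul_nonneg (hlam i) hγ.le)]
  -- C tends to s2/2
  have hC : Tendsto C (nhdsWithin 0 (Set.Ioi 0)) (nhds (s2 / 2)) := by
    apply tendsto_of_tendsto_of_tendsto_of_le_of_le'
      (g := fun γ : ℝ => s2 / 2 - 2 * s3 * γ) (h := fun γ : ℝ => s2 / 2 + 2 * s3 * γ)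
    · have : Tendsto (fun γ : ℝ => s2 / 2 - 2 * s3 * γ) (nhds 0)
          (nhds (s2 / 2 - 2 * s3 * 0)) :=
        tendsto_const_nhds.sub (tendsto_const_nhds.mul tendsto_id)
      simpa using this.mono_left nhdsWithin_le_nhds
    · have : Tendsto (fun γ : ℝ => s2 / 2 + 2 * s3 * γ) (nhds 0)
          (nhds (s2 / 2 + 2 * s3 * 0)) :=
        tendsto_const_nhds.add (tendsto_const_nhds.mul tendsto_id)
      simpa using this.mono_left nhdsWithin_le_nhds
    · filter_upwards [Ioo_mem_nhdsGT_of_mem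
        (Set.mem_Ico.mpr ⟨le_refl (0:ℝ), div_pos one_pos (by linarith)⟩ :
          (0:ℝ) ∈ Set.Ico (0:ℝ) (1 / (2 * s1)))] with γ hγ
      obtain ⟨hγ0, hγ1⟩ := hγ
      have hsmall : ∀ i, lam i * γ ≤ 1/2 := by
        intro i
        have h1 : lam i * γ ≤ s1 * γ := by nlinarith [hle i]
        have h2 : s1 * γ ≤ 1/2 := by
          rw [lt_div_iff₀ (by linarith : (0:ℝ) < 2 * s1)] at hγ1
          nlinarith
        linarith
      have step : ∀ i, lam i ^ 2 * (γ ^ 2) / 2 - 2 * (lam i ^ 3 * γ ^ 3) ≤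
          lam i * γ - Real.log (1 + lam i * γ) := by
        intro i
        have := (log_taylor_bound (mul_nonneg (hlam i) hγ0.le : (0:ℝ) ≤ lam i * γ) (hsmall i)).1
        nlinarith [this]
      have hsumlo : Summable (fun i => lam i ^ 2 * (γ ^ 2) / 2 - 2 * (lam i ^ 3 * γ ^ 3)) :=
        ((hsum2.mul_right (γ^2)).div_const 2).sub ((hsum3.mul_right (γ^3)).mul_left 2)
      have hlo : s2 * γ ^ 2 / 2 - 2 * (s3 * γ ^ 3) ≤
          ∑' i, (lam i * γ - Real.log (1 + lam i * γ)) := by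
        have := Summable.tsum_le_tsum step hsumlo (hsumf γ hγ0)
        rwa [Summable.tsum_sub ((hsum2.mul_right (γ^2)).div_const 2)
          ((hsum3.mul_right (γ^3)).mul_left 2), tsum_div_const, tsum_mul_right,
          tsum_mul_left, tsum_mul_right] at this
      show s2 / 2 - 2 * s3 * γ ≤ γ⁻¹ * γ⁻¹ * ∑' i, (lam i * γ - Real.log (1 + lam i * γ))
      have hg2 : (0:ℝ) < γ⁻¹ * γ⁻¹ := by positivity
      have := mul_le_mul_of_nonneg_left hlo hg2.le
      calc s2 / 2 - 2 * s3 * γ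
          = γ⁻¹ * γ⁻¹ * (s2 * γ ^ 2 / 2 - 2 * (s3 * γ ^ 3)) := by
            field_simp
        _ ≤ _ := this
    · filter_upwards [Ioo_mem_nhdsGT_of_mem
        (Set.mem_Ico.mpr ⟨le_refl (0:ℝ), div_pos one_pos (by linarith)⟩ :
          (0:ℝ) ∈ Set.Ico (0:ℝ) (1 / (2 * s1)))] with γ hγ
      obtain ⟨hγ0, hγ1⟩ := hγ
      have hsmall : ∀ i, lam i * γ ≤ 1/2 := by
        intro i
        have h1 : lam i * γ ≤ s1 * γ := by nlinarith [hle i]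
        have h2 : s1 * γ ≤ 1/2 := by
          rw [lt_div_iff₀ (by linarith : (0:ℝ) < 2 * s1)] at hγ1
          nlinarith
        linarith
      have step : ∀ i, lam i * γ - Real.log (1 + lam i * γ) ≤
          lam i ^ 2 * (γ ^ 2) / 2 + 2 * (lam i ^ 3 * γ ^ 3) := by
        intro i
        have := (log_taylor_bound (mul_nonneg (hlam i) hγ0.le : (0:ℝ) ≤ lam i * γ) (hsmall i)).2
        nlinarith [this]
      have hsumhi : Summable (fun i => lam i ^ 2 * (γ ^ 2) / 2 + 2 * (lam i ^ 3 * γ ^ 3)) :=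
        ((hsum2.mul_right (γ^2)).div_const 2).add ((hsum3.mul_right (γ^3)).mul_left 2)
      have hhi : (∑' i, (lam i * γ - Real.log (1 + lam i * γ))) ≤
          s2 * γ ^ 2 / 2 + 2 * (s3 * γ ^ 3) := by
        have := Summable.tsum_le_tsum step (hsumf γ hγ0) hsumhi
        rwa [Summable.tsum_add ((hsum2.mul_right (γ^2)).div_const 2)
          ((hsum3.mul_right (γ^3)).mul_left 2), tsum_div_const, tsum_mul_right,
          tsum_mul_left, tsum_mul_right] at this
      show γ⁻¹ * γ⁻¹ * ∑' i, (lam i * γ - Real.log (1 + lam i * γ)) ≤ s2 / 2 + 2 * s3 * γ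
      have hg2 : (0:ℝ) < γ⁻¹ * γ⁻¹ := by positivity
      have := mul_le_mul_of_nonneg_left hhi hg2.le
      calc γ⁻¹ * γ⁻¹ * ∑' i, (lam i * γ - Real.log (1 + lam i * γ))
          ≤ γ⁻¹ * γ⁻¹ * (s2 * γ ^ 2 / 2 + 2 * (s3 * γ ^ 3)) := this
        _ = s2 / 2 + 2 * s3 * γ := by field_simp
  -- the ratio tends to s2 / (s2/2) = 2
  have hratio : Tendsto (fun γ => A γ / C γ) (nhdsWithin 0 (Set.Ioi 0)) (nhds 2) := by
    have h2 : (2:ℝ) = s2 / (s2 / 2) := by field_simp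
    rw [h2]
    exact hA.div hC (by positivity)
  -- original function eventually equals A/C
  apply hratio.congr'
  filter_upwards [self_mem_nhdsWithin] with γ hγ
  rw [Set.mem_Ioi] at hγ
  have hγne : γ ≠ 0 := ne_of_gt hγ
  have hnum : s1 - (∑' i, lam i / (1 + lam i * γ)) = γ * A γ := by
    rw [← Summable.tsum_sub hsum (hsumdiv γ hγ)]
    rw [hAdef]
    simp only
    rw [← tsum_mul_left]
    congr 1
    ext i
    have hd := hden γ hγ i
    field_simp
    ring
  have hdenom : s1 - γ⁻¹ * (∑' i, Real.log (1 + lam i * γ)) = γ * C γ := by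
    have hT : ∑' i, (lam i * γ - Real.log (1 + lam i * γ))
        = s1 * γ - ∑' i, Real.log (1 + lam i * γ) := by
      rw [Summable.tsum_sub (hsum.mul_right γ) (hsumlog γ hγ), tsum_mul_right]
    rw [hCdef]
    simp only
    rw [hT]
    field_simp
  show A γ / C γ = _
  rw [hnum, hdenom, mul_div_mul_left _ _ hγne]
end

section
/- Let (λ_i)_{i∈ℕ} be nonnegative reals with Σ_i λ_i < ∞, let Λ = sup_i λ_i, and let γ satisfy 0 < γ and γΛ < 1. For k ≥ 1 set s_k = Σ_i λ_i^k (finite for all k ≥ 1). Then both of the following series identities hold with absolutely convergent right-hand sides: γ^{-1} Σ_i log(1 + λ_i γ) = Σ_{k=0}^{∞} (−1)^k (s_{k+1}/(k+1)) γ^k, and Σ_i λ_i/(1 + λ_i γ) = Σ_{k=0}^{∞} (−1)^k s_{k+1} γ^k. -/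
/-! With `x_i = λ_i γ ∈ [0, γΛ]`, both errors are `γ⁻¹ Σ_i φ(x_i)` for a power series
`φ(x) = Σ_k c_k x^(k+1)` with `|c_k| ≤ 1` (`log (1 + x)` and `x / (1 + x)`). Since
`x_i^(k+1) ≤ (γΛ)^k x_i`, the double series `Σ_{i,k} c_k x_i^(k+1)` is dominated by a geometric
series times `Σ_i x_i`, so the two summations may be interchanged. -/

open Real

lemma Real.hasSum_log_one_add_of_abs_lt_one {a : ℝ} (ha : |a| < 1) :
    HasSum (fun k : ℕ => (-1) ^ k / ((k : ℝ) + 1) * a ^ (k + 1)) (log (1 + a)) := by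
  have h := (hasSum_pow_div_log_of_abs_lt_one (x := -a) (by rwa [abs_neg])).neg
  rw [neg_neg, sub_neg_eq_add] at h
  refine (funext fun k => ?_ : (fun k : ℕ => _) = _) ▸ h
  rw [neg_pow a, pow_succ (-1 : ℝ)]
  ring

lemma hasSum_div_one_add_of_abs_lt_one {a : ℝ} (ha : |a| < 1) :
    HasSum (fun k : ℕ => (-1) ^ k * a ^ (k + 1)) (a / (1 + a)) := by
  have h := (hasSum_geometric_of_abs_lt_one (r := -a) (by rwa [abs_neg])).mul_left a
  rw [sub_neg_eq_add, ← div_eq_mul_inv] at h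
  refine (funext fun k => ?_ : (fun k : ℕ => _) = _) ▸ h
  rw [neg_pow a]
  ring

lemma pow_succ_le_pow_mul_self {a M : ℝ} (ha : 0 ≤ a) (haM : a ≤ M) (k : ℕ) :
    a ^ (k + 1) ≤ M ^ k * a := by
  rw [pow_succ]
  exact mul_le_mul_of_nonneg_right (pow_le_pow_left₀ ha haM k) ha

section PowerSums

variable {ι : Type*} {x : ι → ℝ}

lemma Summable.le_ciSup (hx : Summable x) (i : ι) : x i ≤ ⨆ j, x j :=
  _root_.le_ciSup hx.tendsto_cofinite_zero.bddAbove_range_of_cofinite i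

lemma Summable.pow_succ_of_nonneg (hx0 : ∀ i, 0 ≤ x i) (hx : Summable x) (k : ℕ) :
    Summable fun i => x i ^ (k + 1) :=
  (hx.mul_left _).of_nonneg_of_le (fun i => pow_nonneg (hx0 i) _)
    fun i => pow_succ_le_pow_mul_self (hx0 i) (hx.le_ciSup i) k

lemma tsum_pow_succ_le_iSup_pow_mul_tsum (hx0 : ∀ i, 0 ≤ x i) (hx : Summable x) (k : ℕ) :
    ∑' i, x i ^ (k + 1) ≤ (⨆ i, x i) ^ k * ∑' i, x i := by
  rw [← tsum_mul_left]
  exact (hx.pow_succ_of_nonneg hx0 k).tsum_le_tsum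
    (fun i => pow_succ_le_pow_mul_self (hx0 i) (hx.le_ciSup i) k) (hx.mul_left _)

lemma summable_tsum_pow_succ_mul_pow (hx0 : ∀ i, 0 ≤ x i) (hx : Summable x) {r : ℝ}
    (hr : 0 ≤ r) (hrx : r * ⨆ i, x i < 1) :
    Summable fun k : ℕ => (∑' i, x i ^ (k + 1)) * r ^ k := by
  have hq : 0 ≤ r * ⨆ i, x i := mul_nonneg hr (Real.iSup_nonneg hx0)
  refine ((summable_geometric_of_lt_one hq hrx).mul_left (∑' i, x i)).of_nonneg_of_le
    (fun k => mul_nonneg (tsum_nonneg fun i => pow_nonneg (hx0 i) _) (pow_nonneg hr k))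
    fun k => ?_
  calc (∑' i, x i ^ (k + 1)) * r ^ k ≤ ((⨆ i, x i) ^ k * ∑' i, x i) * r ^ k :=
        mul_le_mul_of_nonneg_right (tsum_pow_succ_le_iSup_pow_mul_tsum hx0 hx k) (pow_nonneg hr k)
    _ = (∑' i, x i) * (r * ⨆ i, x i) ^ k := by ring

lemma summable_prod_mul_pow_succ {c : ℕ → ℝ} (hc : ∀ k, |c k| ≤ 1) (hx0 : ∀ i, 0 ≤ x i)
    (hx : Summable x) (hx1 : ⨆ i, x i < 1) :
    Summable fun p : ℕ × ι => c p.1 * x p.2 ^ (p.1 + 1) := by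
  refine ((summable_geometric_of_lt_one (Real.iSup_nonneg hx0) hx1).mul_of_nonneg hx
    (fun k => pow_nonneg (Real.iSup_nonneg hx0) k) hx0).of_norm_bounded fun ⟨k, i⟩ => ?_
  calc ‖c k * x i ^ (k + 1)‖ = |c k| * x i ^ (k + 1) := by
        rw [Real.norm_eq_abs, abs_mul, abs_of_nonneg (pow_nonneg (hx0 i) _)]
    _ ≤ 1 * ((⨆ i, x i) ^ k * x i) :=
        mul_le_mul (hc k) (pow_succ_le_pow_mul_self (hx0 i) (hx.le_ciSup i) k)
          (pow_nonneg (hx0 i) _) zero_le_one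
    _ = (⨆ i, x i) ^ k * x i := one_mul _

theorem tsum_eq_tsum_mul_tsum_pow_succ {c : ℕ → ℝ} {φ : ℝ → ℝ} (hc : ∀ k, |c k| ≤ 1)
    (hφ : ∀ a, 0 ≤ a → a < 1 → HasSum (fun k => c k * a ^ (k + 1)) (φ a))
    (hx0 : ∀ i, 0 ≤ x i) (hx : Summable x) (hx1 : ⨆ i, x i < 1) :
    ∑' i, φ (x i) = ∑' k, c k * ∑' i, x i ^ (k + 1) := by
  calc ∑' i, φ (x i) = ∑' i, ∑' k, c k * x i ^ (k + 1) :=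
        tsum_congr fun i => (hφ _ (hx0 i) ((hx.le_ciSup i).trans_lt hx1)).tsum_eq.symm
    _ = ∑' k, ∑' i, c k * x i ^ (k + 1) :=
        (summable_prod_mul_pow_succ hc hx0 hx hx1).tsum_comm (f := fun k i => c k * x i ^ (k + 1))
    _ = ∑' k, c k * ∑' i, x i ^ (k + 1) := tsum_congr fun k => tsum_mul_left

theorem inv_mul_tsum_eq_tsum_mul_tsum_pow_succ_mul_pow {c : ℕ → ℝ} {φ : ℝ → ℝ}
    (hc : ∀ k, |c k| ≤ 1)
    (hφ : ∀ a, 0 ≤ a → a < 1 → HasSum (fun k => c k * a ^ (k + 1)) (φ a))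
    (hx0 : ∀ i, 0 ≤ x i) (hx : Summable x) {γ : ℝ} (hγ : 0 < γ) (hγx : γ * ⨆ i, x i < 1) :
    γ⁻¹ * ∑' i, φ (x i * γ) = ∑' k, c k * (∑' i, x i ^ (k + 1)) * γ ^ k := by
  have hxγ : ⨆ i, x i * γ < 1 := by rwa [← Real.iSup_mul_of_nonneg hγ.le, mul_comm]
  rw [tsum_eq_tsum_mul_tsum_pow_succ hc hφ (fun i => mul_nonneg (hx0 i) hγ.le)
    (hx.mul_right γ) hxγ, ← tsum_mul_left]
  refine tsum_congr fun k => ?_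
  simp only [mul_pow, tsum_mul_right]
  field_simp
  ring

end PowerSums

/-- For nonnegative summable `(λ_i)` with `Λ = sup_i λ_i` and `0 < γ`,
`γΛ < 1`, the Schatten sums `s_k = Σ_i λ_i^k` are finite for all `k ≥ 1`, and the causal and
noncausal errors admit the absolutely convergent power series expansions
`γ⁻¹ Σ_i log(1 + λ_i γ) = Σ_k (−1)^k (s_{k+1}/(k+1)) γ^k` and
`Σ_i λ_i/(1 + λ_i γ) = Σ_k (−1)^k s_{k+1} γ^k`. -/
theorem power_series_expansions_of_errors
    (lam : ℕ → ℝ) (hlam : ∀ i, 0 ≤ lam i) (hsum : Summable lam)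
    (γ : ℝ) (hγ : 0 < γ) (hγΛ : γ * (⨆ i, lam i) < 1) :
    (∀ k : ℕ, 1 ≤ k → Summable (fun i => lam i ^ k)) ∧
      Summable (fun k : ℕ => ((∑' i, lam i ^ (k + 1)) / ((k : ℝ) + 1)) * γ ^ k) ∧
      Summable (fun k : ℕ => (∑' i, lam i ^ (k + 1)) * γ ^ k) ∧
      γ⁻¹ * ∑' i, Real.log (1 + lam i * γ)
        = ∑' k : ℕ, (-1 : ℝ) ^ k * ((∑' i, lam i ^ (k + 1)) / ((k : ℝ) + 1)) * γ ^ k ∧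
      ∑' i, lam i / (1 + lam i * γ)
        = ∑' k : ℕ, (-1 : ℝ) ^ k * (∑' i, lam i ^ (k + 1)) * γ ^ k := by
  have hs0 (k : ℕ) : 0 ≤ ∑' i, lam i ^ (k + 1) := tsum_nonneg fun i => pow_nonneg (hlam i) _
  have hs := summable_tsum_pow_succ_mul_pow hlam hsum hγ.le hγΛ
  refine ⟨fun k hk => ?_, ?_, hs, ?_, ?_⟩
  · obtain ⟨m, rfl⟩ := Nat.exists_eq_add_of_le' hk
    exact hsum.pow_succ_of_nonneg hlam m
  · refine hs.of_nonneg_of_le (fun k => by have := hs0 k; positivity) fun k => ?_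
    gcongr
    exact div_le_self (hs0 k) (by simp)
  · rw [inv_mul_tsum_eq_tsum_mul_tsum_pow_succ_mul_pow (φ := fun a => log (1 + a)) (fun k => ?_)
      (fun a ha0 ha1 => hasSum_log_one_add_of_abs_lt_one (abs_lt.2 ⟨by linarith, ha1⟩))
      hlam hsum hγ hγΛ]
    · exact tsum_congr fun k => by ring
    · rw [abs_div, abs_pow, abs_neg, abs_one, one_pow, abs_of_pos (by positivity)]
      exact div_le_one_of_le₀ (by simp) (by positivity)
  · rw [← inv_mul_tsum_eq_tsum_mul_tsum_pow_succ_mul_pow (φ := fun a => a / (1 + a))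
      (fun k => by simp)
      (fun a ha0 ha1 => hasSum_div_one_add_of_abs_lt_one (abs_lt.2 ⟨by linarith, ha1⟩))
      hlam hsum hγ hγΛ, ← tsum_mul_left]
    refine tsum_congr fun i => ?_
    field_simp
end

section
/- Let (Θ, 𝓕, P) be a probability space, Ω a Polish space, and let y_n, y, v: Θ → Ω be random variables with y_n → y P-a.s. Let Λ_n, Λ: Θ → [0,∞) be measurable with Λ_n → Λ P-a.s., E[Λ_n] = 1 for all n, and E[Λ] = 1. Suppose E[Λ_n φ(y_n)] = E[φ(v)] for every n and every bounded continuous φ: Ω → ℝ. Then E[Λ φ(y)] = E[φ(v)] for every bounded continuous φ: Ω → ℝ, and consequently the law μ_v is absolutely continuous with respect to the law μ_y with (dμ_v/dμ_y)(y) = E(Λ | σ(y)) P-a.s. If in addition Λ is σ(y)-measurable and Λ > 0 P-a.s., then μ_y and μ_v are mutually absolutely continuous and (dμ_y/dμ_v)(y) = Λ^{-1} P-a.s. -/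
open MeasureTheory ProbabilityTheory Filter Topology
open scoped BoundedContinuousFunction

/-!
By Scheffé's lemma the densities `Λₙ` converge to `Λ` in `L¹`, and then dominated convergence
lets one pass to the limit in `E[Λₙ φ(yₙ)] = E[φ(v)]`. Bounded continuous functions determine a
finite Borel measure, so `μ_v` is the image of `Λ • P` under `y`; the Radon–Nikodym derivative of
such an image, read along `y`, is the conditional expectation of `Λ` given `σ(y)`.
-/

section Scheffe

variable {α : Type*} [MeasurableSpace α] {μ : Measure α}
  {f : ℕ → α → ℝ} {g : α → ℝ}

theorem tendsto_integral_abs_sub_of_tendsto_integral (hf_int : ∀ n, Integrable (f n) μ)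
    (hg_int : Integrable g μ) (hf_nonneg : ∀ n, 0 ≤ᵐ[μ] f n)
    (hf_lim : ∀ᵐ a ∂μ, Tendsto (fun n => f n a) atTop (𝓝 (g a)))
    (h_integral : Tendsto (fun n => ∫ a, f n a ∂μ) atTop (𝓝 (∫ a, g a ∂μ))) :
    Tendsto (fun n => ∫ a, |f n a - g a| ∂μ) atTop (𝓝 0) := by
  have h_deficit : Tendsto (fun n => ∫ a, max (g a - f n a) 0 ∂μ) atTop (𝓝 0) := by
    have h := tendsto_integral_of_dominated_convergence (F := fun n a => max (g a - f n a) 0)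
      (fun a => |g a|) (fun n => (hg_int.sub (hf_int n)).pos_part.aestronglyMeasurable) hg_int.abs
      (fun n => by
        filter_upwards [hf_nonneg n] with a ha
        rw [Pi.zero_apply] at ha
        rw [Real.norm_of_nonneg (le_max_right _ _)]
        exact max_le (by linarith [le_abs_self (g a), ha]) (abs_nonneg _))
      (by
        filter_upwards [hf_lim] with a ha
        exact (tendsto_const_nhds.sub ha).max tendsto_const_nhds)
    simpa using h
  have h_excess : Tendsto (fun n => ∫ a, (f n a - g a) ∂μ) atTop (𝓝 0) := by
    simpa [integral_sub (hf_int _) hg_int] using h_integral.sub_const (∫ a, g a ∂μ)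
  have h_split : ∀ n, ∫ a, |f n a - g a| ∂μ
      = ∫ a, (f n a - g a) ∂μ + 2 * ∫ a, max (g a - f n a) 0 ∂μ := fun n => by
    have h_abs : ∀ x : ℝ, |x| = x + 2 * max (-x) 0 := fun x => by
      rcases le_total x 0 with h | h
      · rw [abs_of_nonpos h, max_eq_left (by linarith)]; ring
      · rw [abs_of_nonneg h, max_eq_right (by linarith)]; ring
    simp_rw [h_abs, neg_sub]
    have h_excess_int : Integrable (fun a => f n a - g a) μ := (hf_int n).sub hg_int
    have h_deficit_int : Integrable (fun a => 2 * max (g a - f n a) 0) μ :=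
      (hg_int.sub (hf_int n)).pos_part.const_mul 2
    rw [integral_add h_excess_int h_deficit_int, integral_const_mul]
  simpa [h_split] using h_excess.add (h_deficit.const_mul 2)

theorem tendsto_integral_mul_of_tendsto_integral (hf_int : ∀ n, Integrable (f n) μ)
    (hg_int : Integrable g μ) (hf_nonneg : ∀ n, 0 ≤ᵐ[μ] f n)
    (hf_lim : ∀ᵐ a ∂μ, Tendsto (fun n => f n a) atTop (𝓝 (g a)))
    (h_integral : Tendsto (fun n => ∫ a, f n a ∂μ) atTop (𝓝 (∫ a, g a ∂μ)))
    {h : ℕ → α → ℝ} {h_lim : α → ℝ} {C : ℝ} (hh_meas : ∀ n, AEStronglyMeasurable (h n) μ)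
    (hh_bound : ∀ n, ∀ᵐ a ∂μ, |h n a| ≤ C)
    (hh_lim : ∀ᵐ a ∂μ, Tendsto (fun n => h n a) atTop (𝓝 (h_lim a))) :
    Tendsto (fun n => ∫ a, f n a * h n a ∂μ) atTop (𝓝 (∫ a, g a * h_lim a ∂μ)) := by
  have h_fixed : Tendsto (fun n => ∫ a, g a * h n a ∂μ) atTop (𝓝 (∫ a, g a * h_lim a ∂μ)) :=
    tendsto_integral_of_dominated_convergence (fun a => |g a| * C)
      (fun n => hg_int.aestronglyMeasurable.mul (hh_meas n)) (hg_int.abs.mul_const C)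
      (fun n => by
        filter_upwards [hh_bound n] with a ha
        rw [norm_mul, Real.norm_eq_abs, Real.norm_eq_abs]
        exact mul_le_mul_of_nonneg_left ha (abs_nonneg _))
      (by filter_upwards [hh_lim] with a ha using tendsto_const_nhds.mul ha)
  have h_close : Tendsto (fun n => ∫ a, f n a * h n a ∂μ - ∫ a, g a * h n a ∂μ) atTop (𝓝 0) := by
    refine squeeze_zero_norm (a := fun n => (∫ a, |f n a - g a| ∂μ) * C) (fun n => ?_)
      (by simpa using (tendsto_integral_abs_sub_of_tendsto_integral hf_int hg_int hf_nonneg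
        hf_lim h_integral).mul_const C)
    rw [← integral_sub ((hf_int n).mul_bdd (hh_meas n) (by simpa using hh_bound n))
      (hg_int.mul_bdd (hh_meas n) (by simpa using hh_bound n)), ← integral_mul_const]
    refine norm_integral_le_of_norm_le (((hf_int n).sub hg_int).abs.mul_const C) ?_
    filter_upwards [hh_bound n] with a ha
    rw [← sub_mul, norm_mul, Real.norm_eq_abs, Real.norm_eq_abs]
    exact mul_le_mul_of_nonneg_left ha (abs_nonneg _)
  simpa using h_close.add h_fixed

end Scheffe

section ImageOfDensity

variable {Θ Ω : Type*} [MeasurableSpace Θ] [MeasurableSpace Ω] {P : Measure Θ} {Λ : Θ → ℝ}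
  {y : Θ → Ω}

theorem map_withDensity_eq_of_forall_integral_eq [TopologicalSpace Ω] [HasOuterApproxClosed Ω]
    [BorelSpace Ω] {ν : Measure Ω} [IsFiniteMeasure ν] (hΛ_int : Integrable Λ P)
    (hΛ_meas : Measurable Λ) (hΛ_nonneg : 0 ≤ᵐ[P] Λ) (hy : Measurable y)
    (h : ∀ φ : Ω →ᵇ ℝ, ∫ θ, Λ θ * φ (y θ) ∂P = ∫ ω, φ ω ∂ν) :
    (P.withDensity fun θ => ENNReal.ofReal (Λ θ)).map y = ν := by
  have : IsFiniteMeasure (P.withDensity fun θ => ENNReal.ofReal (Λ θ)) :=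
    isFiniteMeasure_withDensity_ofReal hΛ_int.hasFiniteIntegral
  refine ext_of_forall_integral_eq_of_IsFiniteMeasure fun φ => ?_
  rw [integral_map hy.aemeasurable φ.continuous.aestronglyMeasurable,
    integral_withDensity_eq_integral_toReal_smul hΛ_meas.ennreal_ofReal
      (ae_of_all _ fun _ => ENNReal.ofReal_lt_top), ← h φ]
  refine integral_congr_ae ?_
  filter_upwards [hΛ_nonneg] with θ hθ
  rw [ENNReal.toReal_ofReal hθ, smul_eq_mul]

theorem rnDeriv_map_withDensity_ae_eq_condExp [IsFiniteMeasure P] (hΛ_int : Integrable Λ P)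
    (hΛ_meas : Measurable Λ) (hΛ_nonneg : 0 ≤ᵐ[P] Λ) (hy : Measurable y) :
    ∀ᵐ θ ∂P, ((P.withDensity fun θ => ENNReal.ofReal (Λ θ)).map y).rnDeriv (P.map y) (y θ)
      = ENNReal.ofReal ((P[Λ | MeasurableSpace.comap y inferInstance]) θ) := by
  have : IsFiniteMeasure (P.withDensity fun θ => ENNReal.ofReal (Λ θ)) :=
    isFiniteMeasure_withDensity_ofReal hΛ_int.hasFiniteIntegral
  have h_density : (fun θ => ((P.withDensity fun θ => ENNReal.ofReal (Λ θ)).rnDeriv P θ).toReal)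
      =ᵐ[P] Λ := by
    filter_upwards [Measure.rnDeriv_withDensity P hΛ_meas.ennreal_ofReal, hΛ_nonneg] with θ h hθ
    rw [h, ENNReal.toReal_ofReal hθ]
  filter_upwards [toReal_rnDeriv_map
    (withDensity_absolutelyContinuous P fun θ => ENNReal.ofReal (Λ θ)) hy,
    condExp_congr_ae (m := MeasurableSpace.comap y inferInstance) h_density,
    ae_of_ae_map hy.aemeasurable (Measure.rnDeriv_lt_top
      ((P.withDensity fun θ => ENNReal.ofReal (Λ θ)).map y) (P.map y))] with θ h_map h_cond h_fin
  rw [← h_cond, ← h_map, ENNReal.ofReal_toReal h_fin.ne]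

end ImageOfDensity

theorem girsanov_limit_passage_general
    {Θ Ω : Type*} [MeasurableSpace Θ]
    [MetricSpace Ω] [MeasurableSpace Ω] [BorelSpace Ω]
    (P : Measure Θ) [IsProbabilityMeasure P]
    (y v : Θ → Ω) (yn : ℕ → Θ → Ω)
    (hym : Measurable y) (hvm : Measurable v) (hynm : ∀ n, Measurable (yn n))
    (hyconv : ∀ᵐ θ ∂P, Tendsto (fun n => yn n θ) atTop (nhds (y θ)))
    (Λ : Θ → ℝ) (Λn : ℕ → Θ → ℝ)
    (hΛm : Measurable Λ)
    (hΛnonneg : ∀ θ, 0 ≤ Λ θ) (hΛnnonneg : ∀ n θ, 0 ≤ Λn n θ)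
    (hΛconv : ∀ᵐ θ ∂P, Tendsto (fun n => Λn n θ) atTop (nhds (Λ θ)))
    (hEn : ∀ n, ∫ θ, Λn n θ ∂P = 1) (hE : ∫ θ, Λ θ ∂P = 1)
    (hgirsanov : ∀ n, ∀ φ : Ω → ℝ, Continuous φ → (∃ C, ∀ ω, |φ ω| ≤ C) →
      ∫ θ, Λn n θ * φ (yn n θ) ∂P = ∫ θ, φ (v θ) ∂P) :
    (∀ φ : Ω → ℝ, Continuous φ → (∃ C, ∀ ω, |φ ω| ≤ C) →
        ∫ θ, Λ θ * φ (y θ) ∂P = ∫ θ, φ (v θ) ∂P) ∧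
      (P.map v ≪ P.map y ∧
        ∀ᵐ θ ∂P, (P.map v).rnDeriv (P.map y) (y θ)
          = ENNReal.ofReal ((P[Λ | MeasurableSpace.comap y inferInstance]) θ)) ∧
      (Measurable[MeasurableSpace.comap y inferInstance] Λ → (∀ᵐ θ ∂P, 0 < Λ θ) →
        (P.map y ≪ P.map v ∧ P.map v ≪ P.map y ∧
          ∀ᵐ θ ∂P, (P.map y).rnDeriv (P.map v) (y θ) = ENNReal.ofReal (Λ θ)⁻¹)) := by
  have hΛint : Integrable Λ P := .of_integral_ne_zero (by simp [hE])
  have hlimit : ∀ φ : Ω → ℝ, Continuous φ → (∃ C, ∀ ω, |φ ω| ≤ C) →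
      ∫ θ, Λ θ * φ (y θ) ∂P = ∫ θ, φ (v θ) ∂P := by
    rintro φ hφ ⟨C, hC⟩
    refine tendsto_nhds_unique (l := (atTop : Filter ℕ)) ?_ (tendsto_const_nhds (x := ∫ θ, φ (v θ) ∂P))
    refine .congr (fun n => hgirsanov n φ hφ ⟨C, hC⟩) ?_
    exact tendsto_integral_mul_of_tendsto_integral
      (fun n => .of_integral_ne_zero (by simp [hEn])) hΛint
      (fun n => ae_of_all _ (hΛnnonneg n)) hΛconv (by simp [hEn, hE])
      (fun n => (hφ.measurable.comp (hynm n)).aestronglyMeasurable)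
      (fun n => ae_of_all _ fun θ => hC _)
      (by filter_upwards [hyconv] with θ hθ using (hφ.tendsto _).comp hθ)
  have hlaw : (P.withDensity fun θ => ENNReal.ofReal (Λ θ)).map y = P.map v :=
    map_withDensity_eq_of_forall_integral_eq hΛint hΛm (ae_of_all _ hΛnonneg) hym fun φ => by
      rw [integral_map hvm.aemeasurable φ.continuous.aestronglyMeasurable]
      exact hlimit φ φ.continuous ⟨‖φ‖, fun ω => φ.norm_coe_le_norm ω⟩
  have hac : P.map v ≪ P.map y := hlaw ▸ (withDensity_absolutelyContinuous P _).map hym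
  have hrnDeriv := hlaw ▸ rnDeriv_map_withDensity_ae_eq_condExp hΛint hΛm
    (ae_of_all _ hΛnonneg) hym
  refine ⟨hlimit, ⟨hac, hrnDeriv⟩, fun hΛy hΛpos => ?_⟩
  have hac' : P.map y ≪ P.map v := hlaw ▸ (withDensity_absolutelyContinuous'
    hΛm.ennreal_ofReal.aemeasurable (by simpa using hΛpos)).map hym
  rw [condExp_of_stronglyMeasurable hym.comap_le hΛy.stronglyMeasurable hΛint] at hrnDeriv
  refine ⟨hac', hac, ?_⟩
  filter_upwards [ae_of_ae_map hym.aemeasurable (Measure.inv_rnDeriv' hac').symm, hrnDeriv,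
    hΛpos] with θ h_inv h_rnDeriv hθ
  rw [h_inv, Pi.inv_apply, h_rnDeriv, ENNReal.ofReal_inv_of_pos hθ]

/-- Passing to the limit in the Girsanov change-of-variable identity:
if `y_n → y` a.s., `Λ_n → Λ` a.s. with `E[Λ_n] = E[Λ] = 1`, and
`E[Λ_n φ(y_n)] = E[φ(v)]` for all bounded continuous `φ`, then `E[Λ φ(y)] = E[φ(v)]` for all
bounded continuous `φ`, whence `μ_v ≪ μ_y` with `(dμ_v/dμ_y)(y) = E(Λ | σ(y))` a.s.; if moreover
`Λ` is `σ(y)`-measurable and a.s. positive, then `μ_y ∼ μ_v` and `(dμ_y/dμ_v)(y) = Λ⁻¹` a.s. -/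
theorem girsanov_limit_passage
    {Θ Ω : Type*} [MeasurableSpace Θ]
    [MetricSpace Ω] [PolishSpace Ω] [MeasurableSpace Ω] [BorelSpace Ω]
    (P : Measure Θ) [IsProbabilityMeasure P]
    (y v : Θ → Ω) (yn : ℕ → Θ → Ω)
    (hym : Measurable y) (hvm : Measurable v) (hynm : ∀ n, Measurable (yn n))
    (hyconv : ∀ᵐ θ ∂P, Tendsto (fun n => yn n θ) atTop (nhds (y θ)))
    (Λ : Θ → ℝ) (Λn : ℕ → Θ → ℝ)
    (hΛm : Measurable Λ) (hΛnm : ∀ n, Measurable (Λn n))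
    (hΛnonneg : ∀ θ, 0 ≤ Λ θ) (hΛnnonneg : ∀ n θ, 0 ≤ Λn n θ)
    (hΛconv : ∀ᵐ θ ∂P, Tendsto (fun n => Λn n θ) atTop (nhds (Λ θ)))
    (hEn : ∀ n, ∫ θ, Λn n θ ∂P = 1) (hE : ∫ θ, Λ θ ∂P = 1)
    (hgirsanov : ∀ n, ∀ φ : Ω → ℝ, Continuous φ → (∃ C, ∀ ω, |φ ω| ≤ C) →
      ∫ θ, Λn n θ * φ (yn n θ) ∂P = ∫ θ, φ (v θ) ∂P) :
    (∀ φ : Ω → ℝ, Continuous φ → (∃ C, ∀ ω, |φ ω| ≤ C) →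
        ∫ θ, Λ θ * φ (y θ) ∂P = ∫ θ, φ (v θ) ∂P) ∧
      (P.map v ≪ P.map y ∧
        ∀ᵐ θ ∂P, (P.map v).rnDeriv (P.map y) (y θ)
          = ENNReal.ofReal ((P[Λ | MeasurableSpace.comap y inferInstance]) θ)) ∧
      (Measurable[MeasurableSpace.comap y inferInstance] Λ → (∀ᵐ θ ∂P, 0 < Λ θ) →
        (P.map y ≪ P.map v ∧ P.map v ≪ P.map y ∧
          ∀ᵐ θ ∂P, (P.map y).rnDeriv (P.map v) (y θ) = ENNReal.ofReal (Λ θ)⁻¹)) :=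
  girsanov_limit_passage_general P y v yn hym hvm hynm hyconv Λ Λn hΛm hΛnonneg hΛnnonneg hΛconv hEn
    hE hgirsanov
end
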